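/- For each i with 1 ≤ i ≤ N−2, the Noumi operators satisfy the braid relation T̃_i ∘ T̃_{i+1} ∘ T̃_i = T̃_{i+1} ∘ T̃_i ∘ T̃_{i+1} as operators on the ring L of Laurent polynomials. -/

import Mathlib

open scoped BigOperators
open Finset

noncomputable section

namespace RST

/-! ## Rhombic staircase tableaux -/

/-- The four Greek letters `α, β, γ, δ` used to fill tableaux. -/
inductive Greek : Type
  | A | B | G | D
  deriving DecidableEq

instance : Fintype Greek :=
  ⟨{Greek.A, Greek.B, Greek.G, Greek.D}, by intro x; cases x <;> simp⟩

/-- The number of `0`'s (i.e. `∗`'s) in a word. -/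
def nzeros (w : List ℤ) : ℕ := w.count 0

/-- `‖w‖ = length + number of zeros`. -/
def nn (w : List ℤ) : ℕ := w.length + nzeros w

/-- The tiles of the rhombic diagram `Γ(w)` (with its distinguished tiling) are indexed by
pairs `i ≤ j` such that not both `w_i = 0` and `w_j = 0`.  The tile `(i,j)` is a square if
`w_i ≠ 0 ≠ w_j`, a vertical rhombus if `w_i ≠ 0 = w_j`, and a horizontal rhombus if
`w_i = 0 ≠ w_j`.  Tile `(i,j)` lies in the west-strip (row) of the border tile `i` and in the
north-strip (column) of the border tile `j`; the border tile `j` itself is the tile `(j,j)`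
when `w_j ≠ 0`. -/
def IsTile (w : List ℤ) (i j : Fin w.length) : Prop :=
  i ≤ j ∧ ¬(w.get i = 0 ∧ w.get j = 0)

/-- `ColAbove w i' i` says that a tile `(i',j)` lies strictly above the tile `(i,j)` in the
north-strip of the column `j` (in the distinguished tiling, a north-strip consists of its
squares, ordered bottom-to-top by decreasing row index, followed by its horizontal rhombi,
ordered bottom-to-top by decreasing row index). -/
def ColAbove (w : List ℤ) (i' i : Fin w.length) : Prop :=
  (w.get i' = 0 ∧ w.get i ≠ 0) ∨
    (w.get i' = 0 ∧ w.get i = 0 ∧ i' < i) ∨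
    (w.get i' ≠ 0 ∧ w.get i ≠ 0 ∧ i' < i)

/-- A filling of the tiles of `Γ(w)` by Greek letters (`none` = empty tile). -/
abbrev Filling (w : List ℤ) : Type := Fin w.length → Fin w.length → Option Greek

/-- The defining conditions for a rhombic staircase tableau of type `w`. -/
def IsRST (w : List ℤ) (f : Filling w) : Prop :=
  (∀ i j, ¬ IsTile w i j → f i j = none) ∧
  (∀ j, w.get j = -1 → (f j j = some Greek.B ∨ f j j = some Greek.G)) ∧
  (∀ j, w.get j = 1 → (f j j = some Greek.A ∨ f j j = some Greek.D)) ∧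
  (∀ i j, w.get j = 0 → (f i j = none ∨ f i j = some Greek.B ∨ f i j = some Greek.D)) ∧
  (∀ i j, w.get i = 0 → (f i j = none ∨ f i j = some Greek.A ∨ f i j = some Greek.G)) ∧
  (∀ i j i', (f i j = some Greek.A ∨ f i j = some Greek.G) →
      IsTile w i' j → ColAbove w i' i → f i' j = none) ∧
  (∀ i j j', (f i j = some Greek.B ∨ f i j = some Greek.D) →
      j < j' → IsTile w i j' → f i j' = none)

/-- The nearest nonempty tile to the right of `(i,j)` in its west-strip contains `g`. -/
def SeesRight (w : List ℤ) (f : Filling w) (i j : Fin w.length) (g : Greek) : Prop :=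
  ∃ j' : Fin w.length, i ≤ j' ∧ j' < j ∧ f i j' = some g ∧
    ∀ j'' : Fin w.length, j' < j'' → j'' < j → f i j'' = none

/-- The nearest nonempty tile below `(i,j)` in its north-strip contains `g`. -/
def SeesBelow (w : List ℤ) (f : Filling w) (i j : Fin w.length) (g : Greek) : Prop :=
  ∃ i' : Fin w.length, IsTile w i' j ∧ ColAbove w i i' ∧ f i' j = some g ∧
    ∀ i'' : Fin w.length, IsTile w i'' j → ColAbove w i i'' → ColAbove w i'' i' → f i'' j = none

variable {R : Type*} [CommRing R]

open Classical in
/-- The weight of the tile `(i,j)` in the filling `f` (the Greek letter it contains, if any,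
times the appropriate power of `t`). -/
def tileWt (pa pb pg pd pt : R) (w : List ℤ) (f : Filling w) (i j : Fin w.length) : R :=
  if ¬ IsTile w i j then 1
  else
    match f i j with
    | some Greek.A => pa * (if w.get i = 0 then pt else 1)
    | some Greek.B => pb * (if w.get j = 0 then pt else 1)
    | some Greek.G => pg
    | some Greek.D => pd
    | none =>
      if w.get i ≠ 0 ∧ w.get j = 0 then
        -- empty vertical rhombus
        (if SeesRight w f i j Greek.B then pt ^ 2
         else if SeesRight w f i j Greek.A ∨ SeesRight w f i j Greek.G then pt else 1)
      else if w.get i = 0 ∧ w.get j ≠ 0 then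
        -- empty horizontal rhombus
        (if SeesBelow w f i j Greek.A then pt ^ 2
         else if SeesBelow w f i j Greek.B ∨ SeesBelow w f i j Greek.D then pt else 1)
      else
        -- empty square
        (if SeesRight w f i j Greek.B ∨
            ((SeesRight w f i j Greek.A ∨ SeesRight w f i j Greek.G) ∧
              (SeesBelow w f i j Greek.A ∨ SeesBelow w f i j Greek.D)) then pt else 1)

/-- The weight `wt(T)` of a filling: the product of the weights of all its tiles. -/
def wt (pa pb pg pd pt : R) (w : List ℤ) (f : Filling w) : R :=
  ∏ i : Fin w.length, ∏ j : Fin w.length, tileWt pa pb pg pd pt w f i j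

open Classical in
/-- `R(w)`: the generating polynomial of all rhombic staircase tableaux of type `w`. -/
def RR (pa pb pg pd pt : R) (w : List ℤ) : R :=
  ∑ f ∈ Finset.univ.filter (IsRST w), wt pa pb pg pd pt w f

/-- `λ_M = αβt^{M-1} - γδ`. -/
def lamM (pa pb pg pd pt : R) (M : ℕ) : R := pa * pb * pt ^ (M - 1) - pg * pd

variable {K : Type*} [Field K]

/-- The normalized generating function
`R̃(w) = (t-1)^{N-r} / ∏_{i=2r}^{N+r-1} (αβt^i - γδ) · R(w)`. -/
def Rt (pa pb pg pd pt : K) (w : List ℤ) : K :=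
  ((pt - 1) ^ (w.length - nzeros w) /
      ∏ i ∈ Finset.Ico (2 * nzeros w) (w.length + nzeros w), (pa * pb * pt ^ i - pg * pd)) *
    RR pa pb pg pd pt w

/-! ## The ring of Laurent polynomials in `z_1, …, z_N` -/

/-- The ring `L = K[z_1^{±1}, …, z_N^{±1}]` of Laurent polynomials in `N` variables. -/
abbrev Lp (K : Type*) [Field K] (N : ℕ) : Type _ := AddMonoidAlgebra K (Fin N → ℤ)

variable {N : ℕ}

/-- The constant `c` as a Laurent polynomial. -/
def CC (c : K) : Lp K N := AddMonoidAlgebra.single 0 c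

/-- The variable `z_j`. -/
def Z (j : Fin N) : Lp K N := AddMonoidAlgebra.single (Pi.single j 1) 1

/-- The inverse variable `z_j⁻¹`. -/
def Zinv (j : Fin N) : Lp K N := AddMonoidAlgebra.single (Pi.single j (-1)) 1

/-- The coefficient of the Laurent monomial `z^m` in `f`. -/
def coeff (f : Lp K N) (m : Fin N → ℤ) : K := f.coeff m

/-- `f` does not involve the variable `z_v`. -/
def IndepVar (f : Lp K N) (v : Fin N) : Prop :=
  ∀ m : Fin N → ℤ, coeff f m ≠ 0 → m v = 0

/-- `(z^m - s_{uv} z^m)/(z_u - z_v)` as a Laurent polynomial, where `s_{uv}` exchanges the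
variables `z_u, z_v`:  for `p = m u ≥ r = m v` this is `∑_{k=0}^{p-r-1} z_u^{r+k} z_v^{p-1-k}`
(times the other variables), and for `p < r` it is `-∑_{k=0}^{r-p-1} z_u^{p+k} z_v^{r-1-k}`. -/
def ddMono (u v : Fin N) (m : Fin N → ℤ) : Lp K N :=
  if m v ≤ m u then
    ∑ k ∈ Finset.range (m u - m v).toNat,
      AddMonoidAlgebra.single
        (Function.update (Function.update m u (m v + (k : ℤ))) v (m u - 1 - (k : ℤ))) (1 : K)
  else
    - ∑ k ∈ Finset.range (m v - m u).toNat,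
      AddMonoidAlgebra.single
        (Function.update (Function.update m u (m u + (k : ℤ))) v (m v - 1 - (k : ℤ))) (1 : K)

/-- The divided difference `f ↦ (f - s_{uv} f)/(z_u - z_v)`. -/
def ddPair (u v : Fin N) (f : Lp K N) : Lp K N :=
  Finsupp.sum f.coeff fun m c => CC c * ddMono u v m

/-- Noumi's operator `T̃ = t - (t z_u - z_v) (1 - s_{uv})/(z_u - z_v)` on Laurent polynomials;
for `u, v` the positions of `z_i, z_{i+1}` this is the operator `T̃_i`, `1 ≤ i ≤ N-1`. -/
def Tmid (t : K) (u v : Fin N) (f : Lp K N) : Lp K N :=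
  CC t * f - (CC t * Z u - Z v) * ddPair u v f

/-- `(z^m - s₀ z^m)/(z_v - q z_v⁻¹)` as a Laurent polynomial, where `s₀` maps `z_v ↦ q z_v⁻¹`:
for `p = m v ≥ 0` this is `∑_{k=0}^{p-1} q^k z_v^{p-1-2k}` (times the other variables), and for
`p < 0` it is `-∑_{k=0}^{-p-1} q^{p+k} z_v^{p+1+2k}`. -/
def dd0Mono (q : K) (v : Fin N) (m : Fin N → ℤ) : Lp K N :=
  if 0 ≤ m v then
    ∑ k ∈ Finset.range (m v).toNat,
      AddMonoidAlgebra.single (Function.update m v (m v - 1 - 2 * (k : ℤ))) (q ^ (k : ℕ))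
  else
    - ∑ k ∈ Finset.range (-(m v)).toNat,
      AddMonoidAlgebra.single (Function.update m v (m v + 1 + 2 * (k : ℤ))) (q ^ (m v + (k : ℤ)))

/-- The divided difference `f ↦ (f - s₀ f)/(z_v - q z_v⁻¹)`. -/
def dd0 (q : K) (v : Fin N) (f : Lp K N) : Lp K N :=
  Finsupp.sum f.coeff fun m c => CC c * dd0Mono q v m

/-- Noumi's operator `T̃₀ = -ac/q - (z₁-a)(z₁-c)/z₁ · (1-s₀)/(z₁ - q z₁⁻¹)`, acting on the
variable `z_v` (with `v` the position of `z₁`); here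
`-(z-a)(z-c)/z = -z + (a+c) - ac z⁻¹`. -/
def T0 (a c q : K) (v : Fin N) (f : Lp K N) : Lp K N :=
  CC (-(a * c) / q) * f + (CC (a + c) - Z v - CC (a * c) * Zinv v) * dd0 q v f

/-- Noumi's operator `T̃_N = -bd + (bz-1)(dz-1)/z · (1-s_N)/(z - z⁻¹)`, acting on the variable
`z_v` (with `v` the position of `z_N`); here `(bz-1)(dz-1)/z = bd z - (b+d) + z⁻¹`, and
`(1 - s_N)/(z - z⁻¹)` is `dd0` with `q = 1`. -/
def TN (b d : K) (v : Fin N) (f : Lp K N) : Lp K N :=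
  CC (-(b * d)) * f + (CC (b * d) * Z v - CC (b + d) + Zinv v) * dd0 1 v f

/-- The operator `T̃_j` for `0 ≤ j ≤ N` (`T̃₀`, `T̃_j` with `1 ≤ j ≤ N-1`, or `T̃_N`);
the identity for `j` out of range. -/
def TT (a b c d q t : K) (N : ℕ) (j : ℕ) : Lp K N → Lp K N :=
  if h0 : j = 0 then (if hN : 0 < N then T0 a c q ⟨0, hN⟩ else id)
  else if hj : j < N then Tmid t ⟨j - 1, by omega⟩ ⟨j, hj⟩
  else if j = N then (if hN : 0 < N then TN b d ⟨N - 1, by omega⟩ else id)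
  else id

/-- The Hecke parameter `t_j` (`t₀ = -ac/q`, `t_N = -bd`, `t_j = t` otherwise). -/
def tpar (a b c d q t : K) (N : ℕ) (j : ℕ) : K :=
  if j = 0 then -(a * c) / q else if j = N then -(b * d) else t

/-- The inverse operator `T̃_j⁻¹ = t_j⁻¹ (T̃_j + (1 - t_j))`. -/
def TTinv (a b c d q t : K) (N : ℕ) (j : ℕ) (f : Lp K N) : Lp K N :=
  CC (tpar a b c d q t N j)⁻¹ * (TT a b c d q t N j f + CC (1 - tpar a b c d q t N j) * f)

/-- Composition of a list of operators (leftmost applied last). -/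
def opProd (l : List (Lp K N → Lp K N)) : Lp K N → Lp K N := l.foldr (· ∘ ·) id

/-- The Cherednik operator
`Y_i = (T̃_i T̃_{i+1} ⋯ T̃_{N-1})(T̃_N T̃_{N-1} ⋯ T̃_1 T̃_0)(T̃₁⁻¹ T̃₂⁻¹ ⋯ T̃_{i-1}⁻¹)`. -/
def Yop (a b c d q t : K) (N : ℕ) (i : ℕ) : Lp K N → Lp K N :=
  opProd (((List.range' i (N - i)).map (TT a b c d q t N)) ++
    (((List.range (N + 1)).reverse).map (TT a b c d q t N)) ++
    ((List.range' 1 (i - 1)).map (TTinv a b c d q t N)))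

/-- Exchange of the variables `z_u` and `z_v`. -/
def swapVars (u v : Fin N) (f : Lp K N) : Lp K N :=
  Finsupp.sum f.coeff fun m c => AddMonoidAlgebra.single (m ∘ (Equiv.swap u v)) c

/-! ## The open boundary ASEP polynomials `F_μ` -/

/-- The word `μ|_{S̄}` obtained from `μ` by deleting the entries in positions of `S`. -/
def wordOf (N : ℕ) (mu : Fin N → ℤ) (S : Finset (Fin N)) : List ℤ :=
  ((List.finRange N).filter (fun k => decide (k ∉ S))).map mu

/-- The open boundary ASEP polynomial
`F_μ(z;t) = ∑_{S ⊆ V} R̃(μ|_{S̄}) ∏_{i ∈ S} (z_i^{μ_i} - 1)` where `V = {i : μ_i ≠ 0}`. -/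
def FF (pa pb pg pd pt : K) (N : ℕ) (mu : Fin N → ℤ) : Lp K N :=
  ∑ S ∈ (Finset.univ.filter fun k => mu k ≠ 0).powerset,
    CC (Rt pa pb pg pd pt (wordOf N mu S)) *
      ∏ i ∈ S, (AddMonoidAlgebra.single (Pi.single i (mu i)) (1 : K) - 1)

/-- `μ` is a signed permutation of `λ`. -/
def IsSignedPerm (lam mu : Fin N → ℤ) : Prop :=
  ∃ σ : Equiv.Perm (Fin N), ∀ i, mu i = lam (σ i) ∨ mu i = -lam (σ i)

/-- The word `δ = ((-1)^{N-r}, 0^r)`. -/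
def deltaWord (N r : ℕ) : Fin N → ℤ := fun k => if (k : ℕ) < N - r then -1 else 0

/-! ## Generic parameter fields -/

/-- The field `ℚ(a,b,c,d,q,t)` of rational functions in six parameters. -/
abbrev K6 : Type := FractionRing (MvPolynomial (Fin 6) ℚ)

/-- The generators of `K6`. -/
def gen6 (k : Fin 6) : K6 := algebraMap (MvPolynomial (Fin 6) ℚ) K6 (MvPolynomial.X k)

/-- The parameters `a, b, c, d, q, t` in `ℚ(a,b,c,d,q,t)`. -/
def pA : K6 := gen6 0
def pB : K6 := gen6 1
def pC : K6 := gen6 2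
def pD : K6 := gen6 3
def pQ : K6 := gen6 4
def pT : K6 := gen6 5

/-- The change of variables `α = -ac(1-t)/((a-1)(c-1))`. -/
def chA : K6 := -(pA * pC) * (1 - pT) / ((pA - 1) * (pC - 1))
/-- The change of variables `γ = (1-t)/((a-1)(c-1))`. -/
def chG : K6 := (1 - pT) / ((pA - 1) * (pC - 1))
/-- The change of variables `β = -bd(1-t)/((b-1)(d-1))`. -/
def chB : K6 := -(pB * pD) * (1 - pT) / ((pB - 1) * (pD - 1))
/-- The change of variables `δ = (1-t)/((b-1)(d-1))`. -/
def chD : K6 := (1 - pT) / ((pB - 1) * (pD - 1))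

/-- The field `ℚ(α,β,γ,δ,t)` of rational functions in five parameters. -/
abbrev K5 : Type := FractionRing (MvPolynomial (Fin 5) ℚ)

/-- The generators of `K5`. -/
def gen5 (k : Fin 5) : K5 := algebraMap (MvPolynomial (Fin 5) ℚ) K5 (MvPolynomial.X k)

/-- The parameters `α, β, γ, δ, t` in `ℚ(α,β,γ,δ,t)`. -/
def vA : K5 := gen5 0
def vB : K5 := gen5 1
def vG : K5 := gen5 2
def vD : K5 := gen5 3
def vT : K5 := gen5 4

/-- Words of length `N` with entries in `{-1,0,1}` having exactly `r` zeros, as a finite set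
of functions `Fin N → ℤ`. -/
def WordsF (N r : ℕ) : Finset (Fin N → ℤ) :=
  (Finset.univ.image fun g : Fin N → Fin 3 => fun k => ((g k : ℤ) - 1)).filter
    fun mu => (Finset.univ.filter fun k => mu k = 0).card = r

/-- `R(μ)` for a word given as a function `Fin N → ℤ`. -/
def RRw (pa pb pg pd pt : R) (N : ℕ) (mu : Fin N → ℤ) : R :=
  RR pa pb pg pd pt ((List.finRange N).map mu)

open Classical in
/-- The total weighted jump rate (without the normalization `1/(N+1)`) from state `μ` to
state `ν` in the two-species open boundary ASEP. -/
def jump (pa pb pg pd pt : K) (N : ℕ) (mu nu : Fin N → ℤ) : K :=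
  (∑ u : Fin N,
    if h : (u : ℕ) + 1 < N then
      ((if nu = mu ∘ Equiv.swap u ⟨(u : ℕ) + 1, h⟩ ∧
            ((mu u, mu ⟨(u : ℕ) + 1, h⟩) = (1, -1) ∨ (mu u, mu ⟨(u : ℕ) + 1, h⟩) = (1, 0) ∨
              (mu u, mu ⟨(u : ℕ) + 1, h⟩) = (0, -1)) then pt else 0) +
        (if nu = mu ∘ Equiv.swap u ⟨(u : ℕ) + 1, h⟩ ∧
            ((mu u, mu ⟨(u : ℕ) + 1, h⟩) = (-1, 1) ∨ (mu u, mu ⟨(u : ℕ) + 1, h⟩) = (0, 1) ∨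
              (mu u, mu ⟨(u : ℕ) + 1, h⟩) = (-1, 0)) then 1 else 0))
    else 0) +
  (if hN : 0 < N then
      ((if mu ⟨0, hN⟩ = -1 ∧ nu = Function.update mu ⟨0, hN⟩ 1 then pa else 0) +
        (if mu ⟨0, hN⟩ = 1 ∧ nu = Function.update mu ⟨0, hN⟩ (-1) then pg else 0) +
        (if mu ⟨N - 1, by omega⟩ = 1 ∧ nu = Function.update mu ⟨N - 1, by omega⟩ (-1) then pb
          else 0) +
        (if mu ⟨N - 1, by omega⟩ = -1 ∧ nu = Function.update mu ⟨N - 1, by omega⟩ 1 then pd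
          else 0))
    else 0)

open Classical in
/-- The one-step transition matrix of the two-species open boundary ASEP on the set of states
with exactly `r` zeros: off-diagonal entries are the jump rates divided by `N+1`, and the
diagonal entry is the complementary probability. -/
def Pmat (pa pb pg pd pt : K) (N r : ℕ) (mu nu : Fin N → ℤ) : K :=
  jump pa pb pg pd pt N mu nu / (N + 1) +
    (if nu = mu then 1 - (∑ x ∈ WordsF N r, jump pa pb pg pd pt N mu x) / (N + 1) else 0)

/-- A list as a word-function (entries beyond the length are `0`). -/
def funOf (N : ℕ) (w : List ℤ) : Fin N → ℤ := fun k => w.getD (k : ℕ) 0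

end RST


/-!
In the fraction field of `L` the divided difference becomes an honest quotient, so `T̃_i` is the
operator `y ↦ t y - (t z_i - z_{i+1}) (y - s_i y) / (z_i - z_{i+1})` attached to the field
automorphism `s_i`. For two involutive automorphisms satisfying the braid relation and permuting
`z_i, z_{i+1}, z_{i+2}` as `s_i, s_{i+1}` do, both sides of the braid relation for these operators
are rational expressions in the six images of `y` under the group they generate (a quotient of
`S₃`), and the two expressions agree.
-/

def demazureLusztig {F : Type*} [Field F] (σ : F ≃+* F) (t a b y : F) : F :=
  t * y - (t * a - b) * ((y - σ y) / (a - b))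

theorem demazureLusztig_braid {F : Type*} [Field F] (σ₁ σ₂ : F ≃+* F) (t a b c : F)
    (h₁ : ∀ y, σ₁ (σ₁ y) = y) (h₂ : ∀ y, σ₂ (σ₂ y) = y)
    (hbraid : ∀ y, σ₁ (σ₂ (σ₁ y)) = σ₂ (σ₁ (σ₂ y)))
    (h₁a : σ₁ a = b) (h₁b : σ₁ b = a) (h₁c : σ₁ c = c) (h₁t : σ₁ t = t)
    (h₂a : σ₂ a = a) (h₂b : σ₂ b = c) (h₂c : σ₂ c = b) (h₂t : σ₂ t = t)
    (hab : a ≠ b) (hbc : b ≠ c) (hac : a ≠ c) (x : F) :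
    demazureLusztig σ₁ t a b (demazureLusztig σ₂ t b c (demazureLusztig σ₁ t a b x)) =
      demazureLusztig σ₂ t b c (demazureLusztig σ₁ t a b (demazureLusztig σ₂ t b c x)) := by
  simp only [demazureLusztig, map_sub, map_mul, map_div₀, h₁, h₂, h₁a, h₁b, h₁c, h₁t,
    h₂a, h₂b, h₂c, h₂t, ← hbraid]
  field_simp
  ring

lemma Equiv.swap_braid {α : Type*} [DecidableEq α] {u v w : α}
    (huv : u ≠ v) (hvw : v ≠ w) (huw : u ≠ w) :
    Equiv.swap u v * Equiv.swap v w * Equiv.swap u v =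
      Equiv.swap v w * Equiv.swap u v * Equiv.swap v w := by
  rw [Equiv.swap_mul_swap_mul_swap huv huw, Equiv.swap_comm u v, Equiv.swap_comm v w,
    Equiv.swap_mul_swap_mul_swap hvw.symm huw.symm, Equiv.swap_comm]

namespace RST

open AddMonoidAlgebra (single)

variable {N : ℕ} {K : Type*} [Field K]

def permVars (σ : Equiv.Perm (Fin N)) : Lp K N ≃ₐ[K] Lp K N :=
  AddMonoidAlgebra.domCongr K K (LinearEquiv.funCongrLeft ℤ ℤ σ).toAddEquiv

@[simp]
lemma permVars_single (σ : Equiv.Perm (Fin N)) (m : Fin N → ℤ) (c : K) :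
    permVars σ (single m c) = single (m ∘ σ) c :=
  AddMonoidAlgebra.domCongr_single _ m c

lemma permVars_trans (σ τ : Equiv.Perm (Fin N)) :
    (permVars σ).trans (permVars τ) = (permVars (σ * τ) : Lp K N ≃ₐ[K] Lp K N) :=
  AlgEquiv.ext fun f => by
    induction f using AddMonoidAlgebra.induction_linear <;> simp_all [Function.comp_assoc]

lemma permVars_one : (permVars 1 : Lp K N ≃ₐ[K] Lp K N) = AlgEquiv.refl :=
  AlgEquiv.ext fun f => by induction f using AddMonoidAlgebra.induction_linear <;> simp_all

lemma permVars_CC (σ : Equiv.Perm (Fin N)) (c : K) : permVars σ (CC c : Lp K N) = CC c :=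
  permVars_single σ 0 c

lemma permVars_swap_Z (u v j : Fin N) :
    permVars (Equiv.swap u v) (Z j : Lp K N) = Z (Equiv.swap u v j) := by
  rw [Z, permVars_single, Z]
  congr 1
  ext x
  simp [Pi.single_apply, Equiv.swap_apply_eq_iff]

lemma Z_injective : Function.Injective (Z : Fin N → Lp K N) := fun u v h => by
  simpa [Pi.single_apply] using congrFun (AddMonoidAlgebra.single_left_injective one_ne_zero h) u

lemma Z_sub_Z_mul_single (u v : Fin N) (e : Fin N → ℤ) (c : K) :
    (Z u - Z v) * single e c =
      single (e + Pi.single u 1) c - single (e + Pi.single v 1) c := by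
  simp only [Z, sub_mul, AddMonoidAlgebra.single_mul_single, one_mul, add_comm]

lemma Z_sub_Z_mul_sum_single {u v : Fin N} (huv : u ≠ v) (m : Fin N → ℤ) (a b : ℤ) (n : ℕ) :
    (Z u - Z v) * ∑ k ∈ Finset.range n,
        single (Function.update (Function.update m u (a + k)) v (b - 1 - k)) (1 : K) =
      single (Function.update (Function.update m u (a + n)) v (b - n)) 1 -
        single (Function.update (Function.update m u a) v b) 1 := by
  have hstep : ∀ k : ℕ, (Z u - Z v) *
      single (Function.update (Function.update m u (a + k)) v (b - 1 - k)) (1 : K) =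
      single (Function.update (Function.update m u (a + (k + 1 : ℕ))) v (b - (k + 1 : ℕ))) 1 -
        single (Function.update (Function.update m u (a + k)) v (b - k)) 1 := by
    intro k
    rw [Z_sub_Z_mul_single]
    congr 2 <;> ext x <;> by_cases hxu : x = u <;> by_cases hxv : x = v <;>
      simp [hxu, hxv, huv] <;> omega
  rw [Finset.mul_sum, Finset.sum_congr rfl fun k _ => hstep k,
    Finset.sum_range_sub (fun k : ℕ =>
      single (Function.update (Function.update m u (a + k)) v (b - k)) (1 : K))]
  simp

lemma Z_sub_Z_mul_ddMono {u v : Fin N} (huv : u ≠ v) (m : Fin N → ℤ) :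
    (Z u - Z v) * ddMono u v m = single m (1 : K) - single (m ∘ Equiv.swap u v) 1 := by
  have hm : Function.update (Function.update m u (m u)) v (m v) = m := by simp
  have hsm : Function.update (Function.update m u (m v)) v (m u) = m ∘ Equiv.swap u v := by
    rw [Equiv.comp_swap_eq_update, Function.update_comm huv]
  rw [ddMono]
  split_ifs with h
  · rw [Z_sub_Z_mul_sum_single huv, Int.toNat_of_nonneg (by omega)]
    simp only [add_sub_cancel, sub_sub_cancel, hm, hsm]
  · rw [mul_neg, Z_sub_Z_mul_sum_single huv, Int.toNat_of_nonneg (by omega), neg_sub]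
    simp only [add_sub_cancel, sub_sub_cancel, hm, hsm]

lemma Z_sub_Z_mul_ddPair {u v : Fin N} (huv : u ≠ v) (f : Lp K N) :
    (Z u - Z v) * ddPair u v f = f - permVars (Equiv.swap u v) f := by
  have hterm : ∀ m (c : K), (Z u - Z v) * (CC c * ddMono u v m) =
      single m c - permVars (Equiv.swap u v) (single m c) := by
    intro m c
    rw [mul_left_comm, Z_sub_Z_mul_ddMono huv, permVars_single, mul_sub, CC,
      AddMonoidAlgebra.single_mul_single, AddMonoidAlgebra.single_mul_single, zero_add, zero_add,
      mul_one]
  conv_rhs => rw [← AddMonoidAlgebra.sum_coeff_single f]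
  simp only [ddPair, Finsupp.mul_sum, hterm, map_finsuppSum, Finsupp.sum_sub]

def permVarsFrac (σ : Equiv.Perm (Fin N)) : FractionRing (Lp K N) ≃+* FractionRing (Lp K N) :=
  IsFractionRing.ringEquivOfRingEquiv (permVars (K := K) σ).toRingEquiv

lemma permVarsFrac_algebraMap (σ : Equiv.Perm (Fin N)) (f : Lp K N) :
    permVarsFrac σ (algebraMap _ _ f) = algebraMap _ (FractionRing (Lp K N)) (permVars σ f) :=
  IsFractionRing.ringEquivOfRingEquiv_algebraMap _ f

lemma permVarsFrac_permVarsFrac (σ τ : Equiv.Perm (Fin N)) (x : FractionRing (Lp K N)) :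
    permVarsFrac σ (permVarsFrac τ x) = permVarsFrac (τ * σ) x := by
  obtain ⟨f, g, -, rfl⟩ := IsFractionRing.div_surjective (A := Lp K N) x
  simp only [map_div₀, permVarsFrac_algebraMap, ← permVars_trans]
  rfl

lemma permVarsFrac_one (x : FractionRing (Lp K N)) : permVarsFrac 1 x = x := by
  obtain ⟨f, g, -, rfl⟩ := IsFractionRing.div_surjective (A := Lp K N) x
  simp only [map_div₀, permVarsFrac_algebraMap, permVars_one, AlgEquiv.coe_refl, id_eq]

lemma algebraMap_Tmid (t : K) {u v : Fin N} (huv : u ≠ v) (f : Lp K N) :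
    algebraMap (Lp K N) (FractionRing (Lp K N)) (Tmid t u v f) =
      demazureLusztig (permVarsFrac (Equiv.swap u v)) (algebraMap (Lp K N) _ (CC t))
        (algebraMap (Lp K N) _ (Z u)) (algebraMap (Lp K N) _ (Z v))
        (algebraMap (Lp K N) _ f) := by
  have hne :
      algebraMap (Lp K N) (FractionRing (Lp K N)) (Z u) - algebraMap (Lp K N) _ (Z v) ≠ 0 :=
    sub_ne_zero.2 ((IsFractionRing.injective _ _).ne (Z_injective.ne huv))
  have hdd : algebraMap (Lp K N) (FractionRing (Lp K N)) (ddPair u v f) =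
      (algebraMap (Lp K N) _ f - permVarsFrac (Equiv.swap u v) (algebraMap (Lp K N) _ f)) /
        (algebraMap (Lp K N) _ (Z u) - algebraMap (Lp K N) _ (Z v)) := by
    rw [eq_div_iff hne, permVarsFrac_algebraMap, ← map_sub, ← map_sub, ← map_mul, mul_comm,
      Z_sub_Z_mul_ddPair huv]
  simp only [Tmid, demazureLusztig, map_sub, map_mul, hdd]

theorem Tmid_braid (t : K) {u v w : Fin N} (huv : u ≠ v) (hvw : v ≠ w) (huw : u ≠ w)
    (f : Lp K N) :
    Tmid t u v (Tmid t v w (Tmid t u v f)) = Tmid t v w (Tmid t u v (Tmid t v w f)) := by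
  apply IsFractionRing.injective (Lp K N) (FractionRing (Lp K N))
  simp only [algebraMap_Tmid t huv, algebraMap_Tmid t hvw]
  have hinv : ∀ (a b : Fin N) y, permVarsFrac (K := K) (Equiv.swap a b)
      (permVarsFrac (Equiv.swap a b) y) = y := fun a b y => by
    rw [permVarsFrac_permVarsFrac, Equiv.swap_mul_self, permVarsFrac_one]
  have hZ : ∀ a b j : Fin N, permVarsFrac (Equiv.swap a b) (algebraMap (Lp K N) _ (Z j)) =
      algebraMap (Lp K N) _ (Z (Equiv.swap a b j)) := fun a b j => by
    rw [permVarsFrac_algebraMap, permVars_swap_Z]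
  have hCC : ∀ a b : Fin N, permVarsFrac (Equiv.swap a b) (algebraMap (Lp K N) _ (CC t)) =
      algebraMap (Lp K N) _ (CC t) := fun a b => by
    rw [permVarsFrac_algebraMap, permVars_CC]
  have hZne : ∀ {a b : Fin N}, a ≠ b →
      algebraMap (Lp K N) (FractionRing (Lp K N)) (Z a) ≠ algebraMap (Lp K N) _ (Z b) :=
    fun hab => (IsFractionRing.injective _ _).ne (Z_injective.ne hab)
  refine demazureLusztig_braid _ _ _ _ _ _ (hinv u v) (hinv v w) (fun y => ?_) ?_ ?_ ?_
    (hCC u v) ?_ ?_ ?_ (hCC v w) (hZne huv) (hZne hvw) (hZne huw) _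
  · simp only [permVarsFrac_permVarsFrac, Equiv.swap_braid huv hvw huw]
  · rw [hZ, Equiv.swap_apply_left]
  · rw [hZ, Equiv.swap_apply_right]
  · rw [hZ, Equiv.swap_apply_of_ne_of_ne huw.symm hvw.symm]
  · rw [hZ, Equiv.swap_apply_of_ne_of_ne huv huw]
  · rw [hZ, Equiv.swap_apply_left]
  · rw [hZ, Equiv.swap_apply_right]

/-- For `1 ≤ i ≤ N-2`, the Noumi operators satisfy the braid relation
`T̃_i ∘ T̃_{i+1} ∘ T̃_i = T̃_{i+1} ∘ T̃_i ∘ T̃_{i+1}` on Laurent polynomials. -/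
theorem statement3 (N : ℕ) (i : ℕ) (h1 : 1 ≤ i) (h2 : i ≤ N - 2)
    (f : Lp K6 N) :
    Tmid pT ⟨i - 1, by omega⟩ ⟨i, by omega⟩
        (Tmid pT ⟨i, by omega⟩ ⟨i + 1, by omega⟩
          (Tmid pT ⟨i - 1, by omega⟩ ⟨i, by omega⟩ f)) =
      Tmid pT ⟨i, by omega⟩ ⟨i + 1, by omega⟩
        (Tmid pT ⟨i - 1, by omega⟩ ⟨i, by omega⟩
          (Tmid pT ⟨i, by omega⟩ ⟨i + 1, by omega⟩ f)) :=
  Tmid_braid pT (by simp [Fin.ext_iff]; omega) (by simp [Fin.ext_iff]) (by simp [Fin.ext_iff]) f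

end RST
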